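/- arXiv:2002.05625 — 3 statements merged into one kernel-verified Lean document; each statement's English description precedes it below -/
import Mathlib

section
/- Let g ∈ (-1, 1) and b ∈ ℝ with g < b < min(1, 1+g). Then ∫₀^∞ ((1+u)^g - u^g)/u^b du = Γ(1-b)·Γ(-1+b-g)/Γ(-g). -/
/-!
Write `(1 + u)^g - u^g = ∫₀¹ g (u + v)^(g-1) dv` and swap the integrals (Tonelli: the integrand
is nonnegative up to the factor `g`). Scaling `u = v w` gives
`∫₀^∞ u^(-b) (u + v)^(g-1) du = v^(g-b) B(1-b, b-g)`, where the Beta integral on `(0, ∞)` is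
pulled back to `(0, 1)` by `x ↦ x / (1 - x)`. Then `∫₀¹ v^(g-b) dv = 1 / (1 + g - b)`, and
`Γ(z + 1) = z Γ(z)` turns `g B(1-b, b-g) / (1 + g - b)` into `Γ(1-b) Γ(b-g-1) / Γ(-g)`.
-/

open MeasureTheory Set

section Beta

variable {s t : ℝ}

lemma ofReal_rpow_mul_one_sub_rpow {x : ℝ} (hx : x ∈ Icc (0 : ℝ) 1) :
    ((x ^ (s - 1) * (1 - x) ^ (t - 1) : ℝ) : ℂ)
      = (x : ℂ) ^ ((s : ℂ) - 1) * (1 - (x : ℂ)) ^ ((t : ℂ) - 1) := by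
  push_cast
  rw [Complex.ofReal_cpow hx.1, Complex.ofReal_cpow (sub_nonneg.2 hx.2)]
  push_cast
  ring

lemma integrableOn_rpow_mul_one_sub_rpow (hs : 0 < s) (ht : 0 < t) :
    IntegrableOn (fun x : ℝ ↦ x ^ (s - 1) * (1 - x) ^ (t - 1)) (Ioo 0 1) := by
  have hc := (intervalIntegrable_iff_integrableOn_Ioo_of_le zero_le_one).1 <|
    Complex.betaIntegral_convergent (u := s) (v := t) (by simpa) (by simpa)
  refine IntegrableOn.congr_fun hc.re (fun x hx ↦ ?_) measurableSet_Ioo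
  simp [← ofReal_rpow_mul_one_sub_rpow (Ioo_subset_Icc_self hx)]

lemma integral_rpow_mul_one_sub_rpow (hs : 0 < s) (ht : 0 < t) :
    ∫ x in Ioo (0 : ℝ) 1, x ^ (s - 1) * (1 - x) ^ (t - 1)
      = Real.Gamma s * Real.Gamma t / Real.Gamma (s + t) := by
  have hB := Complex.betaIntegral_eq_Gamma_mul_div s t (by simpa) (by simpa)
  rw [Complex.betaIntegral, intervalIntegral.integral_of_le zero_le_one,
    integral_Ioc_eq_integral_Ioo,
    ← setIntegral_congr_fun measurableSet_Ioo
      (fun x hx ↦ ofReal_rpow_mul_one_sub_rpow (Ioo_subset_Icc_self hx)),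
    integral_complex_ofReal, ← Complex.ofReal_add, Complex.Gamma_ofReal, Complex.Gamma_ofReal,
    Complex.Gamma_ofReal] at hB
  exact_mod_cast hB

end Beta

section DivOneSub

lemma hasDerivAt_div_one_sub {x : ℝ} (hx : x ≠ 1) :
    HasDerivAt (fun y : ℝ ↦ y / (1 - y)) ((1 - x) ^ 2)⁻¹ x := by
  refine ((hasDerivAt_id' x).div ((hasDerivAt_const x (1 : ℝ)).sub (hasDerivAt_id' x))
    (sub_ne_zero.2 hx.symm)).congr_deriv ?_
  simp only [Pi.sub_apply]
  ring

lemma injOn_div_one_sub : InjOn (fun y : ℝ ↦ y / (1 - y)) (Iio 1) := by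
  intro x (hx : x < 1) y (hy : y < 1) h
  have hx' : 1 - x ≠ 0 := by linarith
  have hy' : 1 - y ≠ 0 := by linarith
  rw [div_eq_div_iff hx' hy'] at h
  linarith

lemma image_div_one_sub_Ioo : (fun y : ℝ ↦ y / (1 - y)) '' Ioo 0 1 = Ioi 0 := by
  ext u
  refine ⟨fun ⟨x, ⟨hx0, hx1⟩, hxu⟩ ↦ hxu ▸ div_pos hx0 (by linarith), fun (hu : 0 < u) ↦ ?_⟩
  refine ⟨u / (1 + u), ⟨by positivity, (div_lt_one (by positivity)).2 (by linarith)⟩, ?_⟩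
  field_simp
  ring

end DivOneSub

section BetaIoi

variable {s t : ℝ}

lemma abs_inv_sq_smul_rpow_div_one_sub {x : ℝ} (hx : x ∈ Ioo (0 : ℝ) 1) :
    |((1 - x) ^ 2)⁻¹| • ((x / (1 - x)) ^ (s - 1) * (1 + x / (1 - x)) ^ (-(s + t)))
      = x ^ (s - 1) * (1 - x) ^ (t - 1) := by
  obtain ⟨hx0, hx1⟩ := hx
  have h1x : 0 < 1 - x := by linarith
  rw [show 1 + x / (1 - x) = (1 - x)⁻¹ by field_simp; ring, smul_eq_mul, abs_of_pos (by positivity),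
    Real.div_rpow hx0.le h1x.le, Real.inv_rpow h1x.le, ← Real.rpow_neg h1x.le, neg_neg,
    ← Real.rpow_natCast, ← Real.rpow_neg h1x.le, div_eq_mul_inv, ← Real.rpow_neg h1x.le]
  calc (1 - x) ^ (-((2 : ℕ) : ℝ)) * (x ^ (s - 1) * (1 - x) ^ (-(s - 1)) * (1 - x) ^ (s + t))
      = x ^ (s - 1) * ((1 - x) ^ (-((2 : ℕ) : ℝ)) * (1 - x) ^ (-(s - 1)) * (1 - x) ^ (s + t)) := by
        ring
    _ = x ^ (s - 1) * (1 - x) ^ (t - 1) := by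
        rw [← Real.rpow_add h1x, ← Real.rpow_add h1x]
        congr 2
        push_cast
        ring

lemma hasDerivWithinAt_div_one_sub_Ioo :
    ∀ x ∈ Ioo (0 : ℝ) 1, HasDerivWithinAt (fun y : ℝ ↦ y / (1 - y)) ((1 - x) ^ 2)⁻¹ (Ioo 0 1) x :=
  fun _ hx ↦ (hasDerivAt_div_one_sub hx.2.ne).hasDerivWithinAt

lemma integrableOn_Ioi_rpow_mul_one_add_rpow (hs : 0 < s) (ht : 0 < t) :
    IntegrableOn (fun x : ℝ ↦ x ^ (s - 1) * (1 + x) ^ (-(s + t))) (Ioi 0) := by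
  rw [← image_div_one_sub_Ioo, integrableOn_image_iff_integrableOn_abs_deriv_smul measurableSet_Ioo
    hasDerivWithinAt_div_one_sub_Ioo (injOn_div_one_sub.mono Ioo_subset_Iio_self)]
  exact (integrableOn_rpow_mul_one_sub_rpow hs ht).congr_fun
    (fun x hx ↦ (abs_inv_sq_smul_rpow_div_one_sub hx).symm) measurableSet_Ioo

lemma integral_Ioi_rpow_mul_one_add_rpow (hs : 0 < s) (ht : 0 < t) :
    ∫ x in Ioi (0 : ℝ), x ^ (s - 1) * (1 + x) ^ (-(s + t))
      = Real.Gamma s * Real.Gamma t / Real.Gamma (s + t) := by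
  rw [← image_div_one_sub_Ioo, integral_image_eq_integral_abs_deriv_smul measurableSet_Ioo
    hasDerivWithinAt_div_one_sub_Ioo (injOn_div_one_sub.mono Ioo_subset_Iio_self),
    setIntegral_congr_fun measurableSet_Ioo (fun x hx ↦ abs_inv_sq_smul_rpow_div_one_sub hx)]
  exact integral_rpow_mul_one_sub_rpow hs ht

end BetaIoi

section Scaling

variable {s t v : ℝ}

lemma rpow_mul_add_rpow_comp_mul {w : ℝ} (hv : 0 < v) (hw : 0 < w) :
    (v * w) ^ (s - 1) * (v * w + v) ^ (-(s + t))
      = v ^ (-t - 1) * (w ^ (s - 1) * (1 + w) ^ (-(s + t))) := by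
  rw [show v * w + v = v * (1 + w) by ring, Real.mul_rpow hv.le hw.le,
    Real.mul_rpow hv.le (by positivity)]
  calc v ^ (s - 1) * w ^ (s - 1) * (v ^ (-(s + t)) * (1 + w) ^ (-(s + t)))
      = (v ^ (s - 1) * v ^ (-(s + t))) * (w ^ (s - 1) * (1 + w) ^ (-(s + t))) := by ring
    _ = v ^ (-t - 1) * (w ^ (s - 1) * (1 + w) ^ (-(s + t))) := by
        rw [← Real.rpow_add hv]
        ring_nf

lemma integrableOn_Ioi_rpow_mul_add_rpow (hs : 0 < s) (ht : 0 < t) (hv : 0 < v) :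
    IntegrableOn (fun u : ℝ ↦ u ^ (s - 1) * (u + v) ^ (-(s + t))) (Ioi 0) := by
  have h := IntegrableOn.congr_fun
    ((integrableOn_Ioi_rpow_mul_one_add_rpow hs ht).const_mul (v ^ (-t - 1)))
    (fun w (hw : 0 < w) ↦ (rpow_mul_add_rpow_comp_mul hv hw).symm) measurableSet_Ioi
  simpa using (integrableOn_Ioi_comp_mul_left_iff
    (fun u : ℝ ↦ u ^ (s - 1) * (u + v) ^ (-(s + t))) 0 hv).1 h

lemma integral_Ioi_rpow_mul_add_rpow (hv : 0 < v) :
    ∫ u in Ioi (0 : ℝ), u ^ (s - 1) * (u + v) ^ (-(s + t))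
      = v ^ (-t) * ∫ w in Ioi (0 : ℝ), w ^ (s - 1) * (1 + w) ^ (-(s + t)) := by
  calc ∫ u in Ioi (0 : ℝ), u ^ (s - 1) * (u + v) ^ (-(s + t))
      = v * ∫ w in Ioi (0 : ℝ), (v * w) ^ (s - 1) * (v * w + v) ^ (-(s + t)) := by
        rw [integral_comp_mul_left_Ioi (fun u ↦ u ^ (s - 1) * (u + v) ^ (-(s + t))) 0 hv,
          mul_zero, smul_eq_mul, mul_inv_cancel_left₀ hv.ne']
    _ = v * (v ^ (-t - 1) * ∫ w in Ioi (0 : ℝ), w ^ (s - 1) * (1 + w) ^ (-(s + t))) := by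
        rw [setIntegral_congr_fun measurableSet_Ioi (fun w hw ↦ rpow_mul_add_rpow_comp_mul hv hw),
          integral_const_mul]
    _ = v ^ (-t) * ∫ w in Ioi (0 : ℝ), w ^ (s - 1) * (1 + w) ^ (-(s + t)) := by
        rw [← mul_assoc, mul_comm v, ← Real.rpow_add_one hv.ne', sub_add_cancel]

end Scaling

section DoubleIntegral

variable {s t : ℝ}

lemma integrable_prod_rpow_mul_add_rpow (hs : 0 < s) (ht : 0 < t) (ht1 : t < 1) :
    Integrable (Function.uncurry fun v u : ℝ ↦ u ^ (s - 1) * (u + v) ^ (-(s + t)))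
      ((volume.restrict (Ioo 0 1)).prod (volume.restrict (Ioi 0))) := by
  have hmeas : Measurable fun p : ℝ × ℝ ↦ p.2 ^ (s - 1) * (p.2 + p.1) ^ (-(s + t)) := by
    fun_prop
  refine (integrable_prod_iff hmeas.aestronglyMeasurable).2
    ⟨ae_restrict_of_forall_mem measurableSet_Ioo
      fun v hv ↦ integrableOn_Ioi_rpow_mul_add_rpow hs ht hv.1, ?_⟩
  refine IntegrableOn.congr_fun
    (((intervalIntegral.integrableOn_Ioo_rpow_iff one_pos).2 (by linarith : -1 < -t)).mul_const
      (∫ w in Ioi (0 : ℝ), w ^ (s - 1) * (1 + w) ^ (-(s + t)))) (fun v hv ↦ ?_) measurableSet_Ioo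
  have hnorm : ∀ u ∈ Ioi (0 : ℝ), ‖u ^ (s - 1) * (u + v) ^ (-(s + t))‖
      = u ^ (s - 1) * (u + v) ^ (-(s + t)) := fun u (hu : 0 < u) ↦
    Real.norm_of_nonneg <| mul_nonneg (Real.rpow_nonneg hu.le _)
      (Real.rpow_nonneg (by linarith [hv.1]) _)
  rw [setIntegral_congr_fun measurableSet_Ioi hnorm, integral_Ioi_rpow_mul_add_rpow hv.1]

lemma integral_Ioi_integral_Ioo_rpow_mul_add_rpow (hs : 0 < s) (ht : 0 < t) (ht1 : t < 1) :
    ∫ u in Ioi (0 : ℝ), ∫ v in Ioo (0 : ℝ) 1, u ^ (s - 1) * (u + v) ^ (-(s + t))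
      = Real.Gamma s * Real.Gamma t / ((1 - t) * Real.Gamma (s + t)) := by
  have hpow : ∫ v in Ioo (0 : ℝ) 1, v ^ (-t) = 1 / (1 - t) := by
    rw [← integral_Ioc_eq_integral_Ioo, ← intervalIntegral.integral_of_le zero_le_one,
      integral_rpow (Or.inl (by linarith)), Real.one_rpow,
      Real.zero_rpow (by linarith), sub_zero, neg_add_eq_sub]
  rw [← integral_integral_swap (integrable_prod_rpow_mul_add_rpow hs ht ht1),
    setIntegral_congr_fun measurableSet_Ioo (fun v hv ↦ integral_Ioi_rpow_mul_add_rpow hv.1),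
    integral_mul_const, hpow, integral_Ioi_rpow_mul_one_add_rpow hs ht]
  field_simp

end DoubleIntegral

lemma integral_Ioo_mul_rpow_add {u : ℝ} (hu : 0 < u) (g : ℝ) :
    ∫ v in Ioo (0 : ℝ) 1, g * (u + v) ^ (g - 1) = (1 + u) ^ g - u ^ g := by
  have hpos : ∀ v ∈ uIcc (0 : ℝ) 1, 0 < u + v := fun v hv ↦ by
    rw [uIcc_of_le zero_le_one] at hv
    linarith [hv.1]
  rw [← integral_Ioc_eq_integral_Ioo, ← intervalIntegral.integral_of_le zero_le_one,
    intervalIntegral.integral_eq_sub_of_hasDerivAt (f := fun v ↦ (u + v) ^ g)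
      (f' := fun v ↦ g * (u + v) ^ (g - 1))
      (fun v hv ↦ (((hasDerivAt_id' v).const_add u).rpow_const
        (Or.inl (hpos v hv).ne')).congr_deriv (by ring))
      (continuousOn_const.mul (continuousOn_id.const_add u |>.rpow_const
        fun v hv ↦ Or.inl (hpos v hv).ne')).intervalIntegrable,
    add_zero, add_comm]

lemma mul_Gamma_div_eq {g b : ℝ} (h : b - g ≠ 1) :
    g * (Real.Gamma (1 - b) * Real.Gamma (b - g) / ((1 - (b - g)) * Real.Gamma (1 - g)))
      = Real.Gamma (1 - b) * Real.Gamma (-1 + b - g) / Real.Gamma (-g) := by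
  rcases eq_or_ne (Real.Gamma (-g)) 0 with h0 | h0
  -- then the right side is `x / 0 = 0`, and so is the left: by the factor `g` if `g = 0`,
  -- by `Γ(1 - g) = -g Γ(-g) = 0` otherwise
  · rw [h0, div_zero]
    rcases eq_or_ne g 0 with rfl | hg
    · exact zero_mul _
    · rw [show 1 - g = -g + 1 by ring, Real.Gamma_add_one (neg_ne_zero.2 hg), h0]
      simp
  · have hg : g ≠ 0 := by
      rintro rfl
      simp at h0
    have hc : -1 + b - g ≠ 0 := by
      contrapose! h
      linarith
    rw [show 1 - g = -g + 1 by ring, Real.Gamma_add_one (neg_ne_zero.2 hg),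
      show b - g = (-1 + b - g) + 1 by ring, Real.Gamma_add_one hc,
      show 1 - (-1 + b - g + 1) = -(-1 + b - g) by ring]
    field_simp

theorem integral_diff_pow_general (g b : ℝ)
    (h₁ : g < b) (h₂ : b < min 1 (1 + g)) :
    (∫ u in Set.Ioi (0 : ℝ), ((1 + u) ^ g - u ^ g) / u ^ b)
      = Real.Gamma (1 - b) * Real.Gamma (-1 + b - g) / Real.Gamma (-g) := by
  obtain ⟨hb1, hbg⟩ := lt_min_iff.1 h₂
  have key := integral_Ioi_integral_Ioo_rpow_mul_add_rpow (s := 1 - b) (t := b - g)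
    (by linarith) (by linarith) (by linarith)
  rw [show 1 - b - 1 = -b by ring, show -(1 - b + (b - g)) = g - 1 by ring,
    show 1 - b + (b - g) = 1 - g by ring] at key
  calc ∫ u in Ioi (0 : ℝ), ((1 + u) ^ g - u ^ g) / u ^ b
      = g * ∫ u in Ioi (0 : ℝ), ∫ v in Ioo (0 : ℝ) 1, u ^ (-b) * (u + v) ^ (g - 1) := by
        rw [← integral_const_mul]
        refine setIntegral_congr_fun measurableSet_Ioi fun u (hu : 0 < u) ↦ ?_
        rw [← integral_Ioo_mul_rpow_add hu, div_eq_mul_inv, ← integral_mul_const,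
          ← integral_const_mul, Real.rpow_neg hu.le]
        congr 1 with v
        ring
    _ = Real.Gamma (1 - b) * Real.Gamma (-1 + b - g) / Real.Gamma (-g) := by
        rw [key, mul_Gamma_div_eq (by linarith)]

/-- For `g ∈ (-1,1)` and `g < b < min 1 (1+g)`,
`∫₀^∞ ((1+u)^g - u^g)/u^b du = Γ(1-b)·Γ(-1+b-g)/Γ(-g)`. -/
theorem integral_diff_pow (g b : ℝ) (hg : g ∈ Set.Ioo (-1 : ℝ) 1)
    (h₁ : g < b) (h₂ : b < min 1 (1 + g)) :
    (∫ u in Set.Ioi (0 : ℝ), ((1 + u) ^ g - u ^ g) / u ^ b)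
      = Real.Gamma (1 - b) * Real.Gamma (-1 + b - g) / Real.Gamma (-g) :=
  integral_diff_pow_general g b h₁ h₂
end

section
/- Suppose μ₁, μ₂, μ₃ ∈ ℂ all lie in the closure of a half-space ℋ of ℂ whose boundary is a line through the origin, with ℋ not containing the half-line (-∞, 0), and μ₁ + μ₂ + μ₃ ∈ ℋ (the open half-space). Then for any λ₁, λ₂, λ₃ > 0, the linear combination λ₁μ₁ + λ₂μ₂ + λ₃μ₃, if nonzero, does not lie on the half-line (-∞, 0). -/
/-- half-space condition. Suppose `μ₁, μ₂, μ₃ ∈ ℂ` lie in the closure of an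
open half-space `ℋ = {z | Re(z·e^{-iφ}) > 0}` whose boundary is a line through the origin,
`ℋ` does not contain the half-line `(-∞,0)`, and `μ₁+μ₂+μ₃ ∈ ℋ`. Then for any
`λ₁, λ₂, λ₃ > 0`, the combination `λ₁μ₁ + λ₂μ₂ + λ₃μ₃`, if nonzero, is not a negative real. -/
theorem halfspace_condition_avoids_cut (μ₁ μ₂ μ₃ : ℂ) (φ : ℝ)
    (hneg : ∀ x : ℝ, x < 0 → ¬ 0 < ((x : ℂ) * Complex.exp (-(φ : ℂ) * Complex.I)).re)
    (h₁ : 0 ≤ (μ₁ * Complex.exp (-(φ : ℂ) * Complex.I)).re)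
    (h₂ : 0 ≤ (μ₂ * Complex.exp (-(φ : ℂ) * Complex.I)).re)
    (h₃ : 0 ≤ (μ₃ * Complex.exp (-(φ : ℂ) * Complex.I)).re)
    (hsum : 0 < ((μ₁ + μ₂ + μ₃) * Complex.exp (-(φ : ℂ) * Complex.I)).re)
    (l₁ l₂ l₃ : ℝ) (hl₁ : 0 < l₁) (hl₂ : 0 < l₂) (hl₃ : 0 < l₃) :
    (l₁ : ℂ) * μ₁ + (l₂ : ℂ) * μ₂ + (l₃ : ℂ) * μ₃ ≠ 0 →
      ¬ ∃ x : ℝ, x < 0 ∧ (l₁ : ℂ) * μ₁ + (l₂ : ℂ) * μ₂ + (l₃ : ℂ) * μ₃ = (x : ℂ) := by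
  intro _ ⟨x, hx, heq⟩
  apply hneg x hx
  rw [← heq]
  have e : ∀ z : ℂ, ∀ l : ℝ, ((l : ℂ) * z * Complex.exp (-(φ : ℂ) * Complex.I)).re
      = l * (z * Complex.exp (-(φ : ℂ) * Complex.I)).re := by
    intro z l
    rw [mul_assoc, Complex.re_ofReal_mul]
  rw [add_mul, add_mul, Complex.add_re, Complex.add_re, e, e, e]
  rw [add_mul, add_mul, Complex.add_re, Complex.add_re] at hsum
  have hpos : 0 < (μ₁ * Complex.exp (-(φ : ℂ) * Complex.I)).re ∨
      0 < (μ₂ * Complex.exp (-(φ : ℂ) * Complex.I)).re ∨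
      0 < (μ₃ * Complex.exp (-(φ : ℂ) * Complex.I)).re := by
    by_contra hc
    push_neg at hc
    linarith [hc.1, hc.2.1, hc.2.2]
  rcases hpos with h | h | h <;>
    nlinarith [mul_nonneg hl₁.le h₁, mul_nonneg hl₂.le h₂, mul_nonneg hl₃.le h₃,
      mul_pos hl₁ h, mul_pos hl₂ h, mul_pos hl₃ h]
end

section
/- There exists a constant c > 0 (depending only on p and φ) such that for every fixed p < 1 and φ ∈ [0, π), and for all x₁, x₂, y₁, y₂ ∈ (0, ∞): |(x₁ + e^{iφ}y₁)^p − (x₂ + e^{iφ}y₂)^p| ≤ c·(|x₁^p − x₂^p| + |y₁^p − y₂^p|). -/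
/-!
Write `e = exp (iφ)`. For `a, b ≥ 0` one has `‖a + e b‖ ≥ cos (φ/2) · max a b`, and `cos (φ/2) > 0`
when `0 ≤ φ < π`. After the triangle inequality it suffices to move one variable at a time, i.e.
to compare `(z + v t)^p` at two points of a ray `t > 0` with `‖z + v t‖ ≥ M t`. In the variable
`u = t^p` the derivative of `u ↦ (z + v u^{1/p})^p` has norm
`‖z + v t‖^{p-1} ‖v‖ t^{1-p} ≤ M^{p-1} ‖v‖` because `p ≤ 1`, so the mean value inequality gives
`‖(z + v t₁)^p - (z + v t₂)^p‖ ≤ M^{p-1} ‖v‖ |t₁^p - t₂^p|`.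
-/

open Complex Set

section Ray

variable {p : ℝ} {z v : ℂ}

lemma hasDerivAt_cpow_ray_rpow_inv (hp : p ≠ 0) {u : ℝ} (hu : 0 < u)
    (hslit : z + v * (u ^ p⁻¹ : ℝ) ∈ slitPlane) :
    HasDerivAt (fun u : ℝ ↦ (z + v * (u ^ p⁻¹ : ℝ)) ^ (p : ℂ))
      ((z + v * (u ^ p⁻¹ : ℝ)) ^ ((p : ℂ) - 1) * v * (u ^ (p⁻¹ - 1) : ℝ)) u := by
  have hray : HasDerivAt (fun w : ℂ ↦ (z + v * w) ^ (p : ℂ))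
      (p * (z + v * (u ^ p⁻¹ : ℝ)) ^ ((p : ℂ) - 1) * v) (u ^ p⁻¹ : ℝ) := by
    simpa only [id, mul_one] using
      (((hasDerivAt_id ((u ^ p⁻¹ : ℝ) : ℂ)).const_mul v).const_add z).cpow_const hslit
  refine (hray.comp_ofReal.scomp u
    (Real.hasDerivAt_rpow_const (p := p⁻¹) (Or.inl hu.ne'))).congr_deriv ?_
  have hp' : (p : ℂ) ≠ 0 := ofReal_ne_zero.mpr hp
  rw [real_smul]
  push_cast
  field_simp

lemma norm_cpow_ray_deriv_le (hp0 : p ≠ 0) (hp : p ≤ 1) {M : ℝ} (hM : 0 < M) {u : ℝ}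
    (hu : 0 < u) (hnorm : M * u ^ p⁻¹ ≤ ‖z + v * (u ^ p⁻¹ : ℝ)‖) :
    ‖(z + v * (u ^ p⁻¹ : ℝ)) ^ ((p : ℂ) - 1) * v * (u ^ (p⁻¹ - 1) : ℝ)‖ ≤ M ^ (p - 1) * ‖v‖ := by
  set a := u ^ p⁻¹
  have ha : 0 < a := by positivity
  have hu' : u ^ (p⁻¹ - 1) = a ^ (1 - p) := by
    rw [← Real.rpow_mul hu.le]; congr 1; field_simp
  rw [norm_mul, norm_mul, ← ofReal_one, ← ofReal_sub, norm_cpow_real, norm_real,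
    Real.norm_of_nonneg (by positivity), hu']
  calc ‖z + v * a‖ ^ (p - 1) * ‖v‖ * a ^ (1 - p) ≤ (M * a) ^ (p - 1) * ‖v‖ * a ^ (1 - p) := by
        have := Real.rpow_le_rpow_of_nonpos (by positivity) hnorm (by linarith : p - 1 ≤ 0)
        gcongr
    _ = M ^ (p - 1) * ‖v‖ * (a ^ (p - 1) * a ^ (1 - p)) := by
        rw [Real.mul_rpow hM.le ha.le]; ring
    _ = M ^ (p - 1) * ‖v‖ := by
        rw [← Real.rpow_add ha]; simp

lemma norm_cpow_ray_sub_le (hp0 : p ≠ 0) (hp : p ≤ 1) {M : ℝ} (hM : 0 < M)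
    (hslit : ∀ t : ℝ, 0 < t → z + v * t ∈ slitPlane)
    (hnorm : ∀ t : ℝ, 0 < t → M * t ≤ ‖z + v * t‖) {t₁ t₂ : ℝ} (ht₁ : 0 < t₁) (ht₂ : 0 < t₂) :
    ‖(z + v * t₁) ^ (p : ℂ) - (z + v * t₂) ^ (p : ℂ)‖ ≤ M ^ (p - 1) * ‖v‖ * |t₁ ^ p - t₂ ^ p| := by
  have hmvt := Convex.norm_image_sub_le_of_norm_hasDerivWithin_le
    (fun u (hu : 0 < u) ↦
      (hasDerivAt_cpow_ray_rpow_inv hp0 hu (hslit _ (by positivity))).hasDerivWithinAt)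
    (fun u (hu : 0 < u) ↦ norm_cpow_ray_deriv_le hp0 hp hM hu (hnorm _ (by positivity)))
    (convex_Ioi 0) (mem_Ioi.mpr (Real.rpow_pos_of_pos ht₂ p))
    (mem_Ioi.mpr (Real.rpow_pos_of_pos ht₁ p))
  simpa only [Real.rpow_rpow_inv ht₁.le hp0, Real.rpow_rpow_inv ht₂.le hp0, Real.norm_eq_abs]
    using hmvt

end Ray

lemma normSq_ofReal_add_exp_mul_I_mul (φ a b : ℝ) :
    normSq (a + exp (φ * I) * b) = a ^ 2 + 2 * a * b * Real.cos φ + b ^ 2 := by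
  simp only [exp_mul_I, ← ofReal_cos, ← ofReal_sin, normSq_apply, add_re, ofReal_re, mul_re,
    I_re, mul_zero, ofReal_im, I_im, mul_one, sub_self, add_zero, add_im, mul_im, zero_add,
    sub_zero]
  nlinarith [Real.sin_sq_add_cos_sq φ]

lemma norm_ofReal_add_exp_mul_I_mul_comm (φ a b : ℝ) :
    ‖(a : ℂ) + exp (φ * I) * b‖ = ‖(b : ℂ) + exp (φ * I) * a‖ := by
  rw [norm_def, norm_def, normSq_ofReal_add_exp_mul_I_mul, normSq_ofReal_add_exp_mul_I_mul]
  ring_nf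

lemma cos_half_mul_le_norm_ofReal_add_exp_mul_I_mul (φ : ℝ) {a b : ℝ} (ha : 0 ≤ a)
    (hb : 0 ≤ b) : Real.cos (φ / 2) * a ≤ ‖(a : ℂ) + exp (φ * I) * b‖ := by
  have hcos : Real.cos (φ / 2) ^ 2 = (1 + Real.cos φ) / 2 := by
    rw [Real.cos_sq, mul_div_cancel₀ φ two_ne_zero]; ring
  -- for `cos φ < 0`, the right side is `(b + a cos φ)² + (1 - cos² φ) a²`
  have hsq : (1 + Real.cos φ) / 2 * a ^ 2 ≤ a ^ 2 + 2 * a * b * Real.cos φ + b ^ 2 := by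
    rcases le_or_gt 0 (Real.cos φ) with hc | hc
    · nlinarith [mul_nonneg (mul_nonneg ha hb) hc, Real.cos_le_one φ, sq_nonneg a]
    · nlinarith [sq_nonneg (b + a * Real.cos φ), Real.neg_one_le_cos φ,
        mul_nonneg (mul_nonneg (by linarith [Real.neg_one_le_cos φ] : 0 ≤ 1 + Real.cos φ)
          (by linarith : 0 ≤ 1 / 2 - Real.cos φ)) (sq_nonneg a)]
  rw [norm_def, normSq_ofReal_add_exp_mul_I_mul]
  exact (le_abs_self _).trans (Real.abs_le_sqrt (by rw [mul_pow, hcos]; exact hsq))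

section Sector

variable {p φ : ℝ}

lemma cos_half_pos_of_mem_Ico (hφ : φ ∈ Ico 0 Real.pi) : 0 < Real.cos (φ / 2) :=
  Real.cos_pos_of_mem_Ioo ⟨by linarith [Real.pi_pos, hφ.1], by linarith [hφ.2]⟩

lemma ofReal_add_exp_mul_I_mul_mem_slitPlane (hφ : φ ∈ Ico 0 Real.pi) {a b : ℝ}
    (ha : 0 < a) (hb : 0 < b) : (a : ℂ) + exp (φ * I) * b ∈ slitPlane := by
  rw [mem_slitPlane_iff]
  rcases hφ.1.eq_or_lt with rfl | hφ0
  · left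
    simp only [ofReal_zero, zero_mul, exp_zero, one_mul, add_re, ofReal_re]
    positivity
  · right
    simp only [exp_mul_I, ← ofReal_cos, ← ofReal_sin, add_im, ofReal_im, mul_im, add_re,
      ofReal_re, mul_re, I_re, mul_zero, I_im, mul_one, sub_self, add_zero, zero_add, ne_eq,
      mul_eq_zero, not_or]
    exact ⟨(Real.sin_pos_of_pos_of_lt_pi hφ0 hφ.2).ne', hb.ne'⟩

lemma norm_cpow_add_exp_mul_I_sub_le_left (hp0 : p ≠ 0) (hp : p ≤ 1) (hφ : φ ∈ Ico 0 Real.pi)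
    {x₁ x₂ y : ℝ} (hx₁ : 0 < x₁) (hx₂ : 0 < x₂) (hy : 0 < y) :
    ‖((x₁ : ℂ) + exp (φ * I) * y) ^ (p : ℂ) - ((x₂ : ℂ) + exp (φ * I) * y) ^ (p : ℂ)‖
      ≤ Real.cos (φ / 2) ^ (p - 1) * |x₁ ^ p - x₂ ^ p| := by
  have := norm_cpow_ray_sub_le (z := exp (φ * I) * y) (v := 1) hp0 hp (cos_half_pos_of_mem_Ico hφ)
    (fun t ht ↦ by simpa [add_comm] using ofReal_add_exp_mul_I_mul_mem_slitPlane hφ ht hy)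
    (fun t ht ↦ by
      simpa [add_comm] using cos_half_mul_le_norm_ofReal_add_exp_mul_I_mul φ ht.le hy.le)
    hx₁ hx₂
  simpa [add_comm] using this

lemma norm_cpow_add_exp_mul_I_sub_le_right (hp0 : p ≠ 0) (hp : p ≤ 1) (hφ : φ ∈ Ico 0 Real.pi)
    {x y₁ y₂ : ℝ} (hx : 0 < x) (hy₁ : 0 < y₁) (hy₂ : 0 < y₂) :
    ‖((x : ℂ) + exp (φ * I) * y₁) ^ (p : ℂ) - ((x : ℂ) + exp (φ * I) * y₂) ^ (p : ℂ)‖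
      ≤ Real.cos (φ / 2) ^ (p - 1) * |y₁ ^ p - y₂ ^ p| := by
  have := norm_cpow_ray_sub_le (z := x) (v := exp (φ * I)) hp0 hp (cos_half_pos_of_mem_Ico hφ)
    (fun t ht ↦ ofReal_add_exp_mul_I_mul_mem_slitPlane hφ hx ht)
    (fun t ht ↦ by
      rw [norm_ofReal_add_exp_mul_I_mul_comm]
      exact cos_half_mul_le_norm_ofReal_add_exp_mul_I_mul φ ht.le hx.le)
    hy₁ hy₂
  simpa using this

end Sector

/-- For fixed `p < 1` and `φ ∈ [0, π)`, there is a constant `c > 0`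
(depending only on `p` and `φ`) such that for all `x₁, x₂, y₁, y₂ > 0`:
`|(x₁ + e^{iφ}y₁)^p − (x₂ + e^{iφ}y₂)^p| ≤ c·(|x₁^p − x₂^p| + |y₁^p − y₂^p|)`,
with complex powers taken via the principal branch. -/
theorem complex_power_interpolation_inequality (p φ : ℝ) (hp : p < 1)
    (hφ : φ ∈ Set.Ico (0 : ℝ) Real.pi) :
    ∃ c : ℝ, 0 < c ∧ ∀ x₁ x₂ y₁ y₂ : ℝ, 0 < x₁ → 0 < x₂ → 0 < y₁ → 0 < y₂ →
      ‖((x₁ : ℂ) + Complex.exp (φ * Complex.I) * (y₁ : ℂ)) ^ (p : ℂ)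
            - ((x₂ : ℂ) + Complex.exp (φ * Complex.I) * (y₂ : ℂ)) ^ (p : ℂ)‖
        ≤ c * (|x₁ ^ p - x₂ ^ p| + |y₁ ^ p - y₂ ^ p|) := by
  rcases eq_or_ne p 0 with rfl | hp0
  · exact ⟨1, one_pos, fun _ _ _ _ _ _ _ _ ↦ by simp⟩
  refine ⟨Real.cos (φ / 2) ^ (p - 1), by have := cos_half_pos_of_mem_Ico hφ; positivity,
    fun x₁ x₂ y₁ y₂ hx₁ hx₂ hy₁ hy₂ ↦ ?_⟩
  calc _ ≤ ‖((x₁ : ℂ) + exp (φ * I) * y₁) ^ (p : ℂ) - ((x₂ : ℂ) + exp (φ * I) * y₁) ^ (p : ℂ)‖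
        + ‖((x₂ : ℂ) + exp (φ * I) * y₁) ^ (p : ℂ) - ((x₂ : ℂ) + exp (φ * I) * y₂) ^ (p : ℂ)‖ :=
        norm_sub_le_norm_sub_add_norm_sub _ _ _
    _ ≤ _ := by
        rw [mul_add]
        exact add_le_add (norm_cpow_add_exp_mul_I_sub_le_left hp0 hp.le hφ hx₁ hx₂ hy₁)
          (norm_cpow_add_exp_mul_I_sub_le_right hp0 hp.le hφ hx₂ hy₁ hy₂)
end
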